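/- arXiv:2002.07909 — 2 statements merged into one kernel-verified Lean document; each statement's English description precedes it below -/
import Mathlib

section
/- The function x₂(t) := ∇_a^{-ν}(1/p)(t) satisfies ∇[p(t+1)∇_{a*}^ν x₂(t+1)] = 0 for all t ∈ ℕ_{a+1}, and together with the constant function x₁(t) = 1 gives two linearly independent solutions of this homogeneous equation. -/
open Finset

/-- Generalized rising function `x^{↑μ} = Γ(x+μ)/Γ(x)` (equals 0 when `Γ x = 0`,
matching the convention `0^{↑ν} = 0`). -/
noncomputable def rise (x μ : ℝ) : ℝ := Real.Gamma (x + μ) / Real.Gamma x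

/-- Nabla (backward) difference. -/
def nabla (f : ℤ → ℝ) (t : ℤ) : ℝ := f t - f (t - 1)

/-- Caputo nabla fractional difference of order `ν ∈ (0,1)` based at `a`. -/
noncomputable def caputo (ν : ℝ) (a : ℤ) (x : ℤ → ℝ) (t : ℤ) : ℝ :=
  ∑ τ ∈ Finset.Icc (a + 1) t,
    rise ((t - τ + 1 : ℤ) : ℝ) (-ν) / Real.Gamma (1 - ν) * nabla x τ

/-- Nabla fractional sum of order `ν` based at `a`. -/
noncomputable def fsum (ν : ℝ) (a : ℤ) (f : ℤ → ℝ) (t : ℤ) : ℝ :=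
  ∑ τ ∈ Finset.Icc (a + 1) t,
    rise ((t - τ + 1 : ℤ) : ℝ) (ν - 1) / Real.Gamma ν * f τ

/-- The self-adjoint operator `L_a x(t) = ∇[p(t+1)∇_{a*}^ν x(t+1)] + q(t)x(t)`. -/
noncomputable def Lop (ν : ℝ) (a : ℤ) (p q : ℤ → ℝ) (x : ℤ → ℝ) (t : ℤ) : ℝ :=
  (p (t + 1) * caputo ν a x (t + 1) - p t * caputo ν a x t) + q t * x t

/-!
Both `fsum ν a` and `caputo ν a` (after `nabla`) are discrete convolutions
`∑_{τ=a+1}^t k (t - τ) f τ` whose kernels `Γ(n + α) / (Γ α n!) = Ring.multichoose α n` are the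
coefficients of `(1 - x)^(-α)`, for `α = ν` and `α = 1 - ν`. Since `fsum ν a f` vanishes at `a`,
the difference commutes with the convolution, and by Chu–Vandermonde the two kernels convolve to
the coefficients of `(1 - x)^(-1)`, all equal to `1`. Hence the Caputo difference of `fsum ν a f`
is `∇ (∑_{τ=a+1}^t f τ) = f t`, so `p * caputo ν a x₂ = 1` is constant, while constants have
zero Caputo difference. Independence: `x₂ a = 0` but `x₂ (a + 1) = 1 / p (a + 1) ≠ 0`.
-/

theorem Ring.multichoose_add {R : Type*} [CommRing R] [BinomialRing R] [NatPowAssoc R]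
    (r s : R) (n : ℕ) :
    Ring.multichoose (r + s) n =
      ∑ p ∈ antidiagonal n, Ring.multichoose r p.1 * Ring.multichoose s p.2 := by
  have h := Ring.add_choose_eq n (Commute.all (-r) (-s))
  rw [← neg_add, Ring.choose_neg'] at h
  have key : ∀ p ∈ antidiagonal n, Ring.choose (-r) p.1 * Ring.choose (-s) p.2 =
      Int.negOnePow n • (Ring.multichoose r p.1 * Ring.multichoose s p.2) := by
    intro p hp
    rw [Ring.choose_neg', Ring.choose_neg', smul_mul_smul_comm, ← Int.negOnePow_add,
      ← Nat.cast_add, mem_antidiagonal.mp hp]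
  rw [sum_congr rfl key, ← smul_sum] at h
  exact MulAction.injective (Int.negOnePow n) h

theorem Real.Gamma_add_nat_eq_mul_ascPochhammer {α : ℝ} (hα : 0 < α) (n : ℕ) :
    Real.Gamma (α + n) = Real.Gamma α * (ascPochhammer ℝ n).eval α := by
  induction n with
  | zero => simp
  | succ n ih =>
    rw [Nat.cast_succ, ← add_assoc, Real.Gamma_add_one (by positivity), ih,
      ascPochhammer_succ_eval]
    ring

theorem rise_natCast_add_one_div_Gamma {α : ℝ} (hα : 0 < α) (n : ℕ) :
    rise (n + 1) (α - 1) / Real.Gamma α = Ring.multichoose α n := by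
  have hmul : (n.factorial : ℝ) * Ring.multichoose α n = (ascPochhammer ℝ n).eval α := by
    rw [← nsmul_eq_mul, Ring.factorial_nsmul_multichoose_eq_ascPochhammer,
      Polynomial.ascPochhammer_smeval_eq_eval]
  rw [rise, show (n : ℝ) + 1 + (α - 1) = α + n by ring,
    Real.Gamma_add_nat_eq_mul_ascPochhammer hα, Real.Gamma_nat_eq_factorial, ← hmul]
  field_simp [(Real.Gamma_pos_of_pos hα).ne']

theorem rise_intCast_sub_add_one_div_Gamma {α : ℝ} (hα : 0 < α) {τ t : ℤ} (h : τ ≤ t) :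
    rise ((t - τ + 1 : ℤ) : ℝ) (α - 1) / Real.Gamma α =
      Ring.multichoose α (t - τ).toNat := by
  obtain ⟨n, hn⟩ : ∃ n : ℕ, t - τ = n := ⟨_, (Int.toNat_of_nonneg (sub_nonneg.mpr h)).symm⟩
  rw [hn, Int.toNat_natCast, ← rise_natCast_add_one_div_Gamma hα]
  push_cast
  rfl

theorem sum_Icc_toNat_eq_sum_antidiagonal {M : Type*} [AddCommMonoid M] (g : ℕ → ℕ → M)
    {τ t : ℤ} (h : τ ≤ t) :
    ∑ σ ∈ Icc τ t, g (t - σ).toNat (σ - τ).toNat =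
      ∑ p ∈ antidiagonal (t - τ).toNat, g p.1 p.2 := by
  refine sum_nbij' (fun σ => ((t - σ).toNat, (σ - τ).toNat)) (fun p => τ + p.2) ?_ ?_ ?_ ?_ ?_
  · intro σ hσ
    rw [mem_Icc] at hσ
    rw [HasAntidiagonal.mem_antidiagonal]
    omega
  · intro p hp
    rw [HasAntidiagonal.mem_antidiagonal] at hp
    rw [mem_Icc]
    omega
  · intro σ hσ
    rw [mem_Icc] at hσ
    dsimp only
    omega
  · intro p hp
    rw [HasAntidiagonal.mem_antidiagonal] at hp
    ext <;> dsimp only <;> omega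
  · intro σ _; rfl

noncomputable def nablaConv (a : ℤ) (k : ℕ → ℝ) (f : ℤ → ℝ) (t : ℤ) : ℝ :=
  ∑ τ ∈ Icc (a + 1) t, k (t - τ).toNat * f τ

section
variable (a : ℤ) (k l : ℕ → ℝ) (f : ℤ → ℝ)

theorem nablaConv_of_le {t : ℤ} (ht : t ≤ a) : nablaConv a k f t = 0 := by
  rw [nablaConv, Icc_eq_empty (by omega), sum_empty]

theorem nablaConv_base_add_one : nablaConv a k f (a + 1) = k 0 * f (a + 1) := by
  simp [nablaConv]

theorem nablaConv_nablaConv :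
    nablaConv a k (nablaConv a l f) =
      nablaConv a (fun n => ∑ p ∈ antidiagonal n, k p.1 * l p.2) f := by
  funext t
  simp only [nablaConv, mul_sum]
  rw [sum_comm' (t' := Icc (a + 1) t) (s' := fun τ => Icc τ t)
    (by intro σ τ; simp only [mem_Icc]; omega)]
  refine sum_congr rfl fun τ hτ => ?_
  simp only [← mul_assoc]
  rw [← sum_mul, sum_Icc_toNat_eq_sum_antidiagonal (fun i j => k i * l j) (mem_Icc.mp hτ).2]

theorem nablaConv_nabla {x : ℤ → ℝ} (hx : x a = 0) :
    nablaConv a k (nabla x) = nabla (nablaConv a k x) := by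
  funext t
  simp only [nablaConv, nabla, mul_sub, sum_sub_distrib]
  congr 1
  calc ∑ τ ∈ Icc (a + 1) t, k (t - τ).toNat * x (τ - 1)
      = ∑ σ ∈ Icc a (t - 1), k (t - 1 - σ).toNat * x σ := by
        refine sum_nbij' (· - 1) (· + 1) ?_ ?_ ?_ ?_ ?_ <;> intro σ hσ <;> simp_all
    _ = ∑ σ ∈ Icc (a + 1) (t - 1), k (t - 1 - σ).toNat * x σ := by
        refine (sum_subset (Icc_subset_Icc_left (by omega)) fun σ hσ hσ' => ?_).symm
        simp only [mem_Icc] at hσ hσ'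
        rw [show σ = a by omega, hx, mul_zero]

theorem nabla_nablaConv_one {t : ℤ} (ht : a + 1 ≤ t) :
    nabla (nablaConv a (fun _ => 1) f) t = f t := by
  simp only [nabla, nablaConv, one_mul]
  rw [← insert_Icc_sub_one_right_eq_Icc ht, sum_insert (by simp), add_sub_cancel_right]

end

section
variable {ν : ℝ} (a : ℤ)

theorem fsum_eq_nablaConv (hν : 0 < ν) (f : ℤ → ℝ) :
    fsum ν a f = nablaConv a (Ring.multichoose ν) f := by
  funext t
  refine sum_congr rfl fun τ hτ => ?_
  rw [rise_intCast_sub_add_one_div_Gamma hν (mem_Icc.mp hτ).2]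

theorem caputo_eq_nablaConv (hν1 : ν < 1) (x : ℤ → ℝ) :
    caputo ν a x = nablaConv a (Ring.multichoose (1 - ν)) (nabla x) := by
  funext t
  refine sum_congr rfl fun τ hτ => ?_
  rw [← sub_sub_cancel_left 1 ν,
    rise_intCast_sub_add_one_div_Gamma (by linarith) (mem_Icc.mp hτ).2]

end

theorem caputo_fsum {ν : ℝ} (hν : 0 < ν) (hν1 : ν < 1) (a : ℤ) (f : ℤ → ℝ) {t : ℤ}
    (ht : a + 1 ≤ t) : caputo ν a (fsum ν a f) t = f t := by
  have kernel : (fun n => ∑ p ∈ antidiagonal n,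
      Ring.multichoose (1 - ν) p.1 * Ring.multichoose ν p.2) = fun _ => 1 := by
    funext n
    rw [← Ring.multichoose_add, sub_add_cancel, Ring.multichoose_one]
  rw [caputo_eq_nablaConv a hν1, fsum_eq_nablaConv a hν,
    nablaConv_nabla a _ (nablaConv_of_le a _ f le_rfl), nablaConv_nablaConv, kernel,
    nabla_nablaConv_one a f ht]

theorem two_independent_solutions (ν : ℝ) (hν : 0 < ν) (hν1 : ν < 1) (a : ℤ)
    (p : ℤ → ℝ) (hp : ∀ t, a + 1 ≤ t → 0 < p t) :
    (∀ t, a + 1 ≤ t →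
      p (t + 1) * caputo ν a (fsum ν a (fun τ => 1 / p τ)) (t + 1)
        - p t * caputo ν a (fsum ν a (fun τ => 1 / p τ)) t = 0) ∧
    (∀ t, a + 1 ≤ t →
      p (t + 1) * caputo ν a (fun _ => 1) (t + 1)
        - p t * caputo ν a (fun _ => 1) t = 0) ∧
    (∀ c₁ c₂ : ℝ,
      (∀ t, a ≤ t → c₁ * 1 + c₂ * fsum ν a (fun τ => 1 / p τ) t = 0) →
      c₁ = 0 ∧ c₂ = 0) := by
  have caputo_one : caputo ν a (fun _ => 1) = 0 := by
    funext t
    simp [caputo, nabla]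
  refine ⟨fun t ht => ?_, fun t _ => ?_, fun c₁ c₂ h => ?_⟩
  · rw [caputo_fsum hν hν1 a _ (by omega), caputo_fsum hν hν1 a _ ht,
      mul_one_div_cancel (hp _ (by omega)).ne', mul_one_div_cancel (hp t ht).ne', sub_self]
  · simp [caputo_one]
  · have at_a := h a le_rfl
    have at_a_add_one := h (a + 1) (by omega)
    rw [fsum_eq_nablaConv a hν, nablaConv_of_le a _ _ le_rfl] at at_a
    rw [fsum_eq_nablaConv a hν, nablaConv_base_add_one, Ring.multichoose_zero_right]
      at at_a_add_one
    have hc₁ : c₁ = 0 := by linarith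
    refine ⟨hc₁, ?_⟩
    rw [hc₁] at at_a_add_one
    simpa [(hp (a + 1) le_rfl).ne'] using at_a_add_one
end

section
/- For every t ∈ ℕ_a^b, Σ_{s=a+1}^{b} |G(t,s)| = (t−a)^{↑ν}(b−t)/Γ(ν+2) ≤ (b−a)²/(4Γ(ν+2)), where G is the Green's function for ∇∇_{a*}^ν x(t+1)=0, x(a)=x(b)=0. -/
/-!
Since `rise` vanishes at the nonpositive integers, both branches of `Grn` are
`(rise (t - s) - rise (b - s) * rise (t - a) / rise (b - a)) / Γ(1 + ν)`. This is `≤ 0` because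
the ratio `rise (k + 1) / rise k = 1 + ν / k` decreases in `k`, so the sum of `|Grn|` is computed
by the discrete power rule `(ν + 1) * ∑_{m < n} rise m = (n - 1) * rise n`. The bound then follows
from `(t - a) * (b - t) ≤ (b - a) ^ 2 / 4` and `rise n ν ≤ n`, which is convexity of `Γ` on
`[n, n + 1]` together with `Γ (n + 1) = n * Γ n`.
-/

open Finset

/-- Green function for the conjugate BVP `∇∇_{a*}^ν x(t+1) = 0`, `x(a)=x(b)=0`. -/
noncomputable def Grn (ν : ℝ) (a b t s : ℤ) : ℝ :=
  if t ≤ s then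
    -(rise ((b - s : ℤ) : ℝ) ν * rise ((t - a : ℤ) : ℝ) ν) /
      (Real.Gamma (1 + ν) * rise ((b - a : ℤ) : ℝ) ν)
  else
    -(rise ((b - s : ℤ) : ℝ) ν * rise ((t - a : ℤ) : ℝ) ν) /
      (Real.Gamma (1 + ν) * rise ((b - a : ℤ) : ℝ) ν)
      + rise ((t - s : ℤ) : ℝ) ν / Real.Gamma (1 + ν)

open Real

lemma rise_intCast_of_nonpos (μ : ℝ) {k : ℤ} (hk : k ≤ 0) : rise k μ = 0 := by
  obtain ⟨n, rfl⟩ : ∃ n : ℕ, k = -n := ⟨(-k).toNat, by omega⟩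
  simp [rise, Gamma_neg_nat_eq_zero]

lemma rise_pos {x μ : ℝ} (hx : 0 < x) (hxμ : 0 < x + μ) : 0 < rise x μ :=
  div_pos (Gamma_pos_of_pos hxμ) (Gamma_pos_of_pos hx)

lemma rise_nonneg {x μ : ℝ} (hx : 0 ≤ x) (hμ : 0 ≤ μ) : 0 ≤ rise x μ :=
  div_nonneg (Gamma_nonneg_of_nonneg (by linarith)) (Gamma_nonneg_of_nonneg hx)

lemma rise_intCast_nonneg {μ : ℝ} (hμ : 0 ≤ μ) (k : ℤ) : 0 ≤ rise k μ := by
  rcases le_or_gt k 0 with hk | hk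
  · exact (rise_intCast_of_nonpos μ hk).ge
  · exact rise_nonneg (by exact_mod_cast hk.le) hμ

lemma mul_rise_add_one {x μ : ℝ} (h : x + μ ≠ 0) :
    x * rise (x + 1) μ = (x + μ) * rise x μ := by
  rcases eq_or_ne x 0 with rfl | hx
  · simp [rise, Gamma_zero]
  · rw [rise, rise, add_right_comm, Gamma_add_one h, Gamma_add_one hx, mul_div_mul_comm,
      ← mul_assoc, mul_div_cancel₀ _ hx]

lemma rise_add_one {x μ : ℝ} (hx : x ≠ 0) (h : x + μ ≠ 0) :
    rise (x + 1) μ = (1 + μ / x) * rise x μ := by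
  have := mul_rise_add_one h
  field_simp
  linarith

lemma rise_mul_rise_add_le {u m μ : ℝ} (hμ : 0 ≤ μ) (hu : 0 < u) (hum : u ≤ m) (d : ℕ) :
    rise u μ * rise (m + d) μ ≤ rise (u + d) μ * rise m μ := by
  induction d with
  | zero => simp
  | succ d ih =>
    have hud : 0 < u + d := by positivity
    have hmd : 0 < m + d := by linarith
    push_cast
    rw [← add_assoc, ← add_assoc, rise_add_one hmd.ne' (by positivity),
      rise_add_one hud.ne' (by positivity)]
    calc rise u μ * ((1 + μ / (m + d)) * rise (m + d) μ)
        = (1 + μ / (m + d)) * (rise u μ * rise (m + d) μ) := by ring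
      _ ≤ (1 + μ / (u + d)) * (rise (u + d) μ * rise m μ) :=
          mul_le_mul (by gcongr) ih
            (mul_nonneg (rise_nonneg hu.le hμ) (rise_nonneg hmd.le hμ)) (by positivity)
      _ = (1 + μ / (u + d)) * rise (u + d) μ * rise m μ := by ring

lemma rise_le_one_sub_add_mul {x μ : ℝ} (hx : 0 < x) (hμ0 : 0 ≤ μ) (hμ1 : μ ≤ 1) :
    rise x μ ≤ 1 - μ + μ * x := by
  have hconv := convexOn_Gamma.2 (Set.mem_Ioi.2 hx) (Set.mem_Ioi.2 (by linarith : 0 < x + 1))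
    (sub_nonneg.2 hμ1) hμ0 (by ring)
  simp only [smul_eq_mul] at hconv
  rw [show (1 - μ) * x + μ * (x + 1) = x + μ by ring,
    Gamma_add_one hx.ne'] at hconv
  rw [rise, div_le_iff₀ (Gamma_pos_of_pos hx)]
  linarith

lemma rise_intCast_le {μ : ℝ} (hμ0 : 0 ≤ μ) (hμ1 : μ ≤ 1) {k : ℤ} (hk : 0 ≤ k) :
    rise k μ ≤ k := by
  rcases hk.eq_or_lt with rfl | hk
  · simp [rise, Gamma_zero]
  · have hk1 : (1 : ℝ) ≤ k := by exact_mod_cast hk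
    nlinarith [rise_le_one_sub_add_mul (by linarith : (0 : ℝ) < k) hμ0 hμ1]

lemma mul_sum_range_rise {μ : ℝ} (hμ : 0 < μ) (n : ℕ) :
    (μ + 1) * ∑ m ∈ range n, rise m μ = (n - 1) * rise n μ := by
  induction n with
  | zero => simp [rise, Gamma_zero]
  | succ n ih =>
    rw [sum_range_succ, mul_add, ih]
    push_cast
    linear_combination -mul_rise_add_one (x := n) (μ := μ) (by positivity)

lemma mul_sum_Icc_rise_sub {μ : ℝ} (hμ : 0 < μ) {a c : ℤ} (hac : a ≤ c) {b : ℤ} (hcb : c ≤ b) :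
    (μ + 1) * ∑ s ∈ Icc (a + 1) b, rise ((c - s : ℤ) : ℝ) μ =
      (((c - a : ℤ) : ℝ) - 1) * rise ((c - a : ℤ) : ℝ) μ := by
  have htail : ∑ s ∈ Icc (a + 1) c, rise ((c - s : ℤ) : ℝ) μ =
      ∑ s ∈ Icc (a + 1) b, rise ((c - s : ℤ) : ℝ) μ :=
    sum_subset (Icc_subset_Icc le_rfl hcb) fun s hs hs' =>
      rise_intCast_of_nonpos μ (by simp only [mem_Icc] at hs hs'; omega)
  obtain ⟨n, hn⟩ := Int.eq_ofNat_of_zero_le (sub_nonneg.2 hac)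
  have hreindex : ∑ s ∈ Icc (a + 1) c, rise ((c - s : ℤ) : ℝ) μ = ∑ m ∈ range n, rise m μ := by
    refine sum_nbij' (fun s => (c - s).toNat) (fun m => c - m) ?_ ?_ ?_ ?_ ?_
    · intro s hs
      simp only [mem_Icc, mem_range] at hs ⊢
      omega
    · intro m hm
      simp only [mem_Icc, mem_range] at hm ⊢
      omega
    · intro s hs
      simp only [mem_Icc] at hs
      omega
    · intro m _
      omega
    · intro s hs
      simp only [mem_Icc] at hs
      rw [← Int.cast_natCast, Int.toNat_of_nonneg (by omega)]
  rw [← htail, hreindex, mul_sum_range_rise hμ, hn]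
  simp

lemma Grn_eq (ν : ℝ) (a b t s : ℤ) :
    Grn ν a b t s = (rise ((t - s : ℤ) : ℝ) ν -
      rise ((b - s : ℤ) : ℝ) ν * rise ((t - a : ℤ) : ℝ) ν / rise ((b - a : ℤ) : ℝ) ν) /
        Gamma (1 + ν) := by
  unfold Grn
  split_ifs with hts
  · rw [rise_intCast_of_nonpos ν (by omega : t - s ≤ 0)]
    ring
  · ring

lemma Grn_nonpos {ν : ℝ} (hν : 0 < ν) {a b t s : ℤ} (has : a < s) (htb : t ≤ b) :
    Grn ν a b t s ≤ 0 := by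
  rw [Grn_eq]
  refine div_nonpos_of_nonpos_of_nonneg (sub_nonpos.2 ?_) (Gamma_pos_of_pos (by linarith)).le
  rcases le_or_gt t s with hts | hst
  · rw [rise_intCast_of_nonpos ν (by omega : t - s ≤ 0)]
    exact div_nonneg (mul_nonneg (rise_intCast_nonneg hν.le _) (rise_intCast_nonneg hν.le _))
      (rise_intCast_nonneg hν.le _)
  · obtain ⟨d, hd⟩ := Int.eq_ofNat_of_zero_le (sub_nonneg.2 htb)
    have hts : (0 : ℝ) < ((t - s : ℤ) : ℝ) := by exact_mod_cast sub_pos.2 hst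
    have hcross := rise_mul_rise_add_le hν.le hts
      (by exact_mod_cast (by omega : t - s ≤ t - a) : ((t - s : ℤ) : ℝ) ≤ ((t - a : ℤ) : ℝ)) d
    have hdR : (d : ℝ) = b - t := by exact_mod_cast hd.symm
    rw [show ((t - s : ℤ) : ℝ) + d = ((b - s : ℤ) : ℝ) by push_cast; linarith,
      show ((t - a : ℤ) : ℝ) + d = ((b - a : ℤ) : ℝ) by push_cast; linarith] at hcross
    have hba : (0 : ℝ) < ((b - a : ℤ) : ℝ) := by exact_mod_cast (by omega : 0 < b - a)
    rw [le_div_iff₀ (rise_pos hba (by linarith))]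
    exact hcross

lemma sum_Icc_Grn {ν : ℝ} (hν : 0 < ν) {a b t : ℤ} (hab : a < b) (hat : a ≤ t) (htb : t ≤ b) :
    ∑ s ∈ Icc (a + 1) b, Grn ν a b t s =
      -(rise ((t - a : ℤ) : ℝ) ν * ((b : ℝ) - t) / Gamma (ν + 2)) := by
  have hR : rise ((b - a : ℤ) : ℝ) ν ≠ 0 := by
    have hba : (0 : ℝ) < ((b - a : ℤ) : ℝ) := by exact_mod_cast sub_pos.2 hab
    exact (rise_pos hba (by linarith)).ne'
  have hΓ : Gamma (ν + 2) = (ν + 1) * Gamma (1 + ν) := by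
    rw [show ν + 2 = (1 + ν) + 1 by ring, Gamma_add_one (by linarith)]
    ring
  have hsum_t := mul_sum_Icc_rise_sub hν hat htb
  have hsum_b := mul_sum_Icc_rise_sub hν hab.le le_rfl
  simp_rw [Grn_eq, ← sum_div, sum_sub_distrib, ← sum_div, ← sum_mul]
  rw [hΓ]
  field_simp
  push_cast at hsum_t hsum_b ⊢
  linear_combination rise ((b : ℝ) - a) ν * hsum_t - rise ((t : ℝ) - a) ν * hsum_b

theorem greens_function_abs_sum (ν : ℝ) (hν : 0 < ν) (hν1 : ν < 1) (a b : ℤ)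
    (hab : a < b) :
    ∀ t : ℤ, a ≤ t → t ≤ b →
      (∑ s ∈ Finset.Icc (a + 1) b, |Grn ν a b t s|) =
        rise ((t - a : ℤ) : ℝ) ν * ((b : ℝ) - t) / Real.Gamma (ν + 2) ∧
      (∑ s ∈ Finset.Icc (a + 1) b, |Grn ν a b t s|) ≤
        ((b : ℝ) - a) ^ 2 / (4 * Real.Gamma (ν + 2)) := by
  intro t hat htb
  have hsum : ∑ s ∈ Icc (a + 1) b, |Grn ν a b t s| =
      rise ((t - a : ℤ) : ℝ) ν * ((b : ℝ) - t) / Gamma (ν + 2) := by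
    rw [sum_congr rfl fun s hs => abs_of_nonpos (Grn_nonpos hν (by simp only [mem_Icc] at hs; omega) htb),
      sum_neg_distrib, sum_Icc_Grn hν hab hat htb, neg_neg]
  refine ⟨hsum, hsum ▸ ?_⟩
  have hrise : rise ((t - a : ℤ) : ℝ) ν ≤ (t : ℝ) - a := by
    exact_mod_cast rise_intCast_le hν.le hν1.le (sub_nonneg.2 hat)
  have hbt : (0 : ℝ) ≤ (b : ℝ) - t := by exact_mod_cast sub_nonneg.2 htb
  rw [← div_div]
  gcongr ?_ / _
  nlinarith [sq_nonneg ((t : ℝ) - a - (b - t)), mul_le_mul_of_nonneg_right hrise hbt]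
end
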